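/- arXiv:2304.07416 — 5 statements merged into one kernel-verified Lean document; each statement's English description precedes it below -/
import Mathlib

section
/- If K is an absolutely weakly compact or absolutely weakly sequentially compact subset of a separable Banach lattice E, then the absolute weak topology restricted to K is metrizable. -/
set_option linter.unusedSectionVars false

open Filter Topology Pointwise MeasureTheory


section Defs

variable {E : Type*} [NormedAddCommGroup E] [Lattice E] [HasSolidNorm E] [IsOrderedAddMonoid E] [NormedSpace ℝ E]

/-- The pseudometric on a Banach lattice induced by a positive continuous linear functional `f`,
given by `dist x y = f |x - y|`. -/
noncomputable def absSeminormDist (f : E →L[ℝ] ℝ) (hf : ∀ x : E, 0 ≤ x → 0 ≤ f x) :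
    PseudoMetricSpace E where
  dist x y := f |x - y|
  dist_self x := by simp
  dist_comm x y := by simp [abs_sub_comm]
  dist_triangle x y z := by
    have h1 : |x - z| ≤ |x - y| + |y - z| := by
      calc |x - z| = |(x - y) + (y - z)| := by abel_nf
      _ ≤ |x - y| + |y - z| := abs_add_le _ _
    have h2 := hf (|x - y| + |y - z| - |x - z|) (sub_nonneg.mpr h1)
    simp only [map_sub, map_add] at h2
    linarith

/-- The absolute weak topology `|σ|(E, E*)` on a Banach lattice `E`: the topology generated by
the lattice seminorms `x ↦ |x*|(|x|) = x*(|x|)`, for `x*` ranging over the positive continuous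
linear functionals on `E`. -/
noncomputable def absWeakTopology (E : Type*) [NormedAddCommGroup E] [Lattice E] [HasSolidNorm E] [IsOrderedAddMonoid E] [NormedSpace ℝ E] :
    TopologicalSpace E :=
  ⨅ f : {f : E →L[ℝ] ℝ // ∀ x : E, 0 ≤ x → 0 ≤ f x},
    (absSeminormDist f.1 f.2).toUniformSpace.toTopologicalSpace

end Defs

/-!
For a dense sequence `(uₙ)` in `E`, Hahn–Banach applied to the sublinear functional `y ↦ ‖y⁺‖`
gives positive functionals `fₙ` with `|fₙ y| ≤ ‖y‖` and `fₙ |uₙ| = ‖uₙ‖`; then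
`‖z‖ ≤ fₙ |z| + 2 ‖z - uₙ‖`, so the `fₙ |·|` separate points. Hence the countably many
`|σ|(E, E*)`-continuous functions `x ↦ fₙ |x - uₘ|` define a continuous injection of `E` into the
metrizable space `ℕ × ℕ → ℝ`. A continuous injection of a compact or sequentially compact space
into a metrizable space is a closed embedding, so its domain is metrizable.
-/

open HasSolidNorm

lemma norm_posPart_smul_of_pos {E : Type*} [NormedAddCommGroup E] [Lattice E] [NormedSpace ℝ E]
    [PosSMulMono ℝ E] {c : ℝ} (hc : 0 < c) (y : E) : ‖(c • y)⁺‖ = c * ‖y⁺‖ := by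
  have h := (OrderIso.smulRight hc).map_sup y 0
  simp only [OrderIso.smulRight_apply, smul_zero] at h
  rw [posPart_def, posPart_def, ← h, norm_smul, Real.norm_of_nonneg hc.le]

section PositiveFunctionals

variable {E : Type*} [NormedAddCommGroup E] [Lattice E] [HasSolidNorm E] [IsOrderedAddMonoid E]

lemma norm_posPart_le (y : E) : ‖y⁺‖ ≤ ‖y‖ := by
  simpa [posPart_def] using norm_sup_sub_sup_le_norm y 0 0

lemma norm_posPart_add_le (y z : E) : ‖(y + z)⁺‖ ≤ ‖y⁺‖ + ‖z⁺‖ := by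
  have hsum_nonneg : 0 ≤ y⁺ + z⁺ := add_nonneg (posPart_nonneg y) (posPart_nonneg z)
  have hle : (y + z)⁺ ≤ y⁺ + z⁺ :=
    sup_le (add_le_add (le_posPart y) (le_posPart z)) hsum_nonneg
  calc ‖(y + z)⁺‖ ≤ ‖y⁺ + z⁺‖ :=
        solid (by rwa [abs_of_nonneg (posPart_nonneg _), abs_of_nonneg hsum_nonneg])
    _ ≤ ‖y⁺‖ + ‖z⁺‖ := norm_add_le _ _

lemma exists_linearMap_le_norm_posPart_apply_eq [NormedSpace ℝ E] [PosSMulMono ℝ E] {x : E}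
    (hx : 0 ≤ x) :
    ∃ F : E →ₗ[ℝ] ℝ, (∀ y, F y ≤ ‖y⁺‖) ∧ F x = ‖x‖ := by
  have hker : ∀ c : ℝ, c • x = 0 → c • ‖x‖ = 0 := fun c hc => by
    rcases smul_eq_zero.mp hc with rfl | rfl <;> simp
  set g := LinearPMap.mkSpanSingleton' (σ := RingHom.id ℝ) x ‖x‖ hker
  have hg : ∀ v : g.domain, g v ≤ ‖(v : E)⁺‖ := by
    rintro ⟨v, hv⟩
    obtain ⟨c, rfl⟩ := Submodule.mem_span_singleton.mp hv
    rw [LinearPMap.mkSpanSingleton'_apply, RingHom.id_apply, smul_eq_mul]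
    rcases le_or_gt 0 c with hc | hc
    · rw [posPart_eq_self.mpr (smul_nonneg hc hx), norm_smul, Real.norm_of_nonneg hc]
    · exact (mul_nonpos_of_nonpos_of_nonneg hc.le (norm_nonneg x)).trans (norm_nonneg _)
  obtain ⟨F, hFg, hF⟩ := exists_extension_of_le_sublinear g (fun y => ‖y⁺‖)
    (fun c hc y => norm_posPart_smul_of_pos hc y) norm_posPart_add_le hg
  refine ⟨F, hF, ?_⟩
  have hxmem : x ∈ g.domain := Submodule.mem_span_singleton_self x
  rw [hFg ⟨x, hxmem⟩, LinearPMap.mkSpanSingleton'_apply_self]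

lemma exists_positive_dual_apply_eq_norm [NormedSpace ℝ E] [PosSMulMono ℝ E] {x : E} (hx : 0 ≤ x) :
    ∃ f : E →L[ℝ] ℝ, (∀ y, 0 ≤ y → 0 ≤ f y) ∧ (∀ y, |f y| ≤ ‖y‖) ∧ f x = ‖x‖ := by
  obtain ⟨F, hFle, hFx⟩ := exists_linearMap_le_norm_posPart_apply_eq hx
  have hbound : ∀ y, |F y| ≤ ‖y‖ := fun y => abs_le.mpr
    ⟨by linarith [F.map_neg y, hFle (-y), norm_posPart_le (-y), norm_neg y],
     (hFle y).trans (norm_posPart_le y)⟩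
  refine ⟨F.mkContinuous 1 (fun y => by simpa using hbound y), fun y hy => ?_, hbound, hFx⟩
  have hneg : F (-y) ≤ 0 := by simpa [posPart_eq_zero.mpr (neg_nonpos.mpr hy)] using hFle (-y)
  simpa using hneg

end PositiveFunctionals

lemma le_zero_of_forall_le_mul_norm_sub {F ι : Type*} [SeminormedAddCommGroup F] {u : ι → F}
    (hu : DenseRange u) {a c : ℝ} {z : F} (h : ∀ i, a ≤ c * ‖z - u i‖) : a ≤ 0 := by
  have hz : a ≤ c * ‖z - z‖ :=
    hu.induction_on (p := fun w => a ≤ c * ‖z - w‖) z (isClosed_le continuous_const (by fun_prop)) h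
  simpa using hz

section AbsWeakTopology

variable {E : Type*} [NormedAddCommGroup E] [Lattice E] [HasSolidNorm E] [IsOrderedAddMonoid E]
  [NormedSpace ℝ E]

lemma continuous_absWeakTopology_apply_abs_sub (f : E →L[ℝ] ℝ) (hf : ∀ x : E, 0 ≤ x → 0 ≤ f x)
    (u : E) : Continuous[absWeakTopology E, _] (fun x => f |x - u|) :=
  continuous_iInf_dom (i := ⟨f, hf⟩) <| by
    let := absSeminormDist f hf
    exact continuous_id.dist continuous_const

omit [HasSolidNorm E] in
lemma apply_abs_sub_le_add (f : E →L[ℝ] ℝ) (hf : ∀ x : E, 0 ≤ x → 0 ≤ f x) (x y u : E) :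
    f |x - y| ≤ f |x - u| + f |y - u| :=
  @dist_triangle_right E (absSeminormDist f hf) x y u

variable {f : E →L[ℝ] ℝ} (hf_le : ∀ y, |f y| ≤ ‖y‖)
include hf_le

lemma apply_abs_le_norm (z : E) : f |z| ≤ ‖z‖ :=
  (le_abs_self _).trans ((hf_le _).trans (norm_abs_eq_norm z).le)

lemma norm_le_apply_abs_add {u : E} (hfu : f |u| = ‖u‖) (z : E) : ‖z‖ ≤ f |z| + 2 * ‖z - u‖ := by
  have h₁ : f (|u| - |z|) ≤ ‖u - z‖ :=
    (le_abs_self _).trans ((hf_le _).trans (norm_abs_sub_abs u z))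
  have h₂ := norm_sub_norm_le z u
  rw [map_sub, hfu, norm_sub_rev] at h₁
  linarith

end AbsWeakTopology

section DenseNormingSequence

variable {E : Type*} [NormedAddCommGroup E] [Lattice E] [HasSolidNorm E] [IsOrderedAddMonoid E]
  [NormedSpace ℝ E] {u : ℕ → E} (hu : DenseRange u) {f : ℕ → E →L[ℝ] ℝ}
  (hf_le : ∀ n y, |f n y| ≤ ‖y‖) (hf_norm : ∀ n, f n |u n| = ‖u n‖)
include hu hf_le hf_norm

lemma eq_zero_of_forall_apply_abs_eq_zero {z : E} (hz : ∀ n, f n |z| = 0) : z = 0 :=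
  norm_le_zero_iff.mp <| le_zero_of_forall_le_mul_norm_sub hu fun n => by
    simpa [hz n] using norm_le_apply_abs_add (hf_le n) (hf_norm n) z

lemma injective_apply_abs_sub (hf_pos : ∀ n y, 0 ≤ y → 0 ≤ f n y) :
    Function.Injective fun (x : E) (p : ℕ × ℕ) => f p.1 |x - u p.2| := by
  intro x y hxy
  have hdist : ∀ n, f n |x - y| = 0 := fun n => by
    refine le_antisymm (le_zero_of_forall_le_mul_norm_sub (c := 2) (z := x) hu fun m => ?_)
      (hf_pos n _ (abs_nonneg _))
    have hxym : f n |x - u m| = f n |y - u m| := congrFun hxy (n, m)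
    calc f n |x - y| ≤ f n |x - u m| + f n |y - u m| :=
          apply_abs_sub_le_add (f n) (hf_pos n) x y (u m)
      _ = 2 * f n |x - u m| := by rw [← hxym]; ring
      _ ≤ 2 * ‖x - u m‖ := by gcongr; exact apply_abs_le_norm (hf_le n) _
  exact sub_eq_zero.mp (eq_zero_of_forall_apply_abs_eq_zero hu hf_le hf_norm hdist)

end DenseNormingSequence

theorem exists_injective_continuous_absWeakTopology {E : Type*} [NormedAddCommGroup E] [Lattice E]
    [HasSolidNorm E] [IsOrderedAddMonoid E] [NormedSpace ℝ E] [PosSMulMono ℝ E]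
    [TopologicalSpace.SeparableSpace E] :
    ∃ Φ : E → (ℕ × ℕ → ℝ), Function.Injective Φ ∧ Continuous[absWeakTopology E, _] Φ := by
  obtain ⟨u, hu⟩ := TopologicalSpace.exists_dense_seq E
  choose f hf_pos hf_le hf_norm using fun n => exists_positive_dual_apply_eq_norm (abs_nonneg (u n))
  let := absWeakTopology E
  have hf_norm' : ∀ n, f n |u n| = ‖u n‖ := fun n => (hf_norm n).trans (norm_abs_eq_norm _)
  exact ⟨_, injective_apply_abs_sub hu hf_le hf_norm' hf_pos,
    continuous_pi fun p => continuous_absWeakTopology_apply_abs_sub (f p.1) (hf_pos p.1) (u p.2)⟩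

section SeqCompact

variable {X Y : Type*} [TopologicalSpace X] [TopologicalSpace Y] [SeqCompactSpace X] [T2Space Y]
  [SequentialSpace Y] {f : X → Y}

theorem Continuous.isClosedMap_of_seqCompactSpace (hf : Continuous f) : IsClosedMap f := by
  intro C hC
  refine IsSeqClosed.isClosed fun {y} {p} hy hyp => ?_
  choose c hcC hcy using hy
  obtain ⟨a, φ, hφ, hca⟩ := SeqCompactSpace.tendsto_subseq c
  refine ⟨a, hC.mem_of_tendsto hca (Eventually.of_forall fun n => hcC _), ?_⟩
  refine tendsto_nhds_unique ((hf.tendsto a).comp hca) ?_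
  simpa [Function.comp_def, hcy] using hyp.comp hφ.tendsto_atTop

theorem Continuous.isClosedEmbedding_of_seqCompactSpace (hf : Continuous f)
    (hinj : Function.Injective f) : IsClosedEmbedding f :=
  .of_continuous_injective_isClosedMap hf hinj hf.isClosedMap_of_seqCompactSpace

end SeqCompact

theorem absWeak_metrizable_on_compact_general {E : Type*} [NormedAddCommGroup E] [Lattice E] [HasSolidNorm E] [IsOrderedAddMonoid E] [NormedSpace ℝ E] [PosSMulStrictMono ℝ E]
    [TopologicalSpace.SeparableSpace E] (K : Set E)
    (hK : @IsCompact E (absWeakTopology E) K ∨ @IsSeqCompact E (absWeakTopology E) K) :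
    @TopologicalSpace.MetrizableSpace K
      (TopologicalSpace.induced (Subtype.val : K → E) (absWeakTopology E)) := by
  let := absWeakTopology E
  obtain ⟨Φ, hΦ_inj, hΦ_cont⟩ := exists_injective_continuous_absWeakTopology (E := E)
  have hcont : Continuous (Φ ∘ Subtype.val : K → ℕ × ℕ → ℝ) := hΦ_cont.comp continuous_subtype_val
  have hinj : Function.Injective (Φ ∘ Subtype.val : K → ℕ × ℕ → ℝ) :=
    hΦ_inj.comp Subtype.val_injective
  have hemb : IsClosedEmbedding (Φ ∘ Subtype.val : K → ℕ × ℕ → ℝ) := by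
    rcases hK with hK | hK
    · have := isCompact_iff_compactSpace.mp hK
      exact hcont.isClosedEmbedding hinj
    · have := isSeqCompact_iff_seqCompactSpace.mp hK
      exact hcont.isClosedEmbedding_of_seqCompactSpace hinj
  exact hemb.isEmbedding.metrizableSpace

/-- If `K` is an absolutely weakly compact or absolutely weakly sequentially compact subset of
a separable Banach lattice `E`, the absolute weak topology restricted to `K` is metrizable. -/
theorem absWeak_metrizable_on_compact {E : Type*} [NormedAddCommGroup E] [Lattice E] [HasSolidNorm E] [IsOrderedAddMonoid E] [NormedSpace ℝ E] [PosSMulStrictMono ℝ E] [PosSMulReflectLT ℝ E] [CompleteSpace E]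
    [TopologicalSpace.SeparableSpace E] (K : Set E)
    (hK : @IsCompact E (absWeakTopology E) K ∨ @IsSeqCompact E (absWeakTopology E) K) :
    @TopologicalSpace.MetrizableSpace K
      (TopologicalSpace.induced (Subtype.val : K → E) (absWeakTopology E)) :=
  absWeak_metrizable_on_compact_general K hK
end

section
/- Every absolutely weakly compact subset of a Banach lattice is absolutely weakly sequentially compact. -/
/-!
Every continuous linear functional `f` on a normed lattice is dominated, `|f x| ≤ g |x|`, by a
positive functional `g` (Riesz–Kantorovich: `g = 2 f⁺ - f` with `f⁺ x = sup f [0, x]` for `x ≥ 0`).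
Hence the absolute weak topology is finer than the weak topology, and norm-closed convex sets are
absolutely weakly closed.

Given a sequence in `K`, the closed span `Y` of its terms is separable, so countably many
functionals `gᵢ` separate the points of `Y`. The image of `K` under `v ↦ (gᵢ v)ᵢ` is a compact
subset of the metrizable space `ℕ → ℝ`, so along a subsequence all `gᵢ` converge. Every absolutely
weak cluster point of this subsequence lies in `Y` and has these limits as its `gᵢ`-values, so
there is only one cluster point, and compactness of `K` forces convergence to it.
-/

set_option linter.unusedSectionVars false

open Filter Topology Pointwise MeasureTheory


open Set TopologicalSpace

theorem tendsto_of_isCompact_of_injOn {X Z ι : Type*} [tX : TopologicalSpace X] [TopologicalSpace Z]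
    [T2Space Z] {K S : Set X} {Φ : X → Z} {l : Filter ι} [l.NeBot] {u : ι → X} {z : Z}
    (hK : IsCompact K) (hS : IsClosed S) (hΦ : Continuous Φ) (hinj : InjOn Φ S)
    (huK : ∀ᶠ n in l, u n ∈ K) (huS : ∀ᶠ n in l, u n ∈ S) (hz : Tendsto (Φ ∘ u) l (𝓝 z)) :
    ∃ a ∈ K, Tendsto u l (𝓝 a) := by
  have hclusterPt : ∀ a, MapClusterPt a l u → a ∈ S ∧ Φ a = z := fun a ha =>
    ⟨hS.mem_of_mapClusterPt ha huS,
      eq_of_nhds_neBot (ClusterPt.mono (ha.tendsto_comp (hΦ.tendsto a)) hz)⟩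
  obtain ⟨a, haK, ha⟩ := hK.exists_mapClusterPt (le_principal_iff.2 huK)
  refine ⟨a, haK, hK.tendsto_nhds_of_unique_mapClusterPt huK fun b _ hb => ?_⟩
  exact hinj (hclusterPt b hb).1 (hclusterPt a ha).1
    ((hclusterPt b hb).2.trans (hclusterPt a ha).2.symm)

theorem TopologicalSpace.IsSeparable.exists_seq_strongDual_separating {𝕜 E : Type*} [RCLike 𝕜]
    [NormedAddCommGroup E] [NormedSpace 𝕜 E] {S : Set E} (hS : IsSeparable S) :
    ∃ g : ℕ → StrongDual 𝕜 E, ∀ w ∈ S, (∀ i, g i w = 0) → w = 0 := by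
  obtain ⟨c, hc, hSc⟩ := hS
  obtain ⟨d, hd⟩ := (hc.insert 0).exists_eq_range (insert_nonempty 0 c)
  choose g hg_norm hg_apply using fun n => exists_dual_vector'' 𝕜 (d n)
  refine ⟨g, fun w hw hgw => norm_le_zero_iff.1 (le_of_forall_pos_le_add fun ε hε => ?_)⟩
  have hw' : w ∈ closure (range d) := hd ▸ closure_mono (subset_insert 0 c) (hSc hw)
  obtain ⟨-, ⟨n, rfl⟩, hn⟩ := Metric.mem_closure_iff.1 hw' (ε / 2) (half_pos hε)
  rw [dist_eq_norm] at hn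
  -- `g n` attains the norm of `d n` but vanishes at the nearby point `w`
  have hdn : ‖d n‖ ≤ ‖w - d n‖ :=
    calc ‖d n‖ = ‖g n (d n - w)‖ := by simp [map_sub, hgw, hg_apply]
      _ ≤ ‖g n‖ * ‖d n - w‖ := (g n).le_opNorm _
      _ ≤ ‖w - d n‖ := by
        rw [norm_sub_rev]
        exact mul_le_of_le_one_left (norm_nonneg _) (hg_norm n)
  calc ‖w‖ ≤ ‖w - d n‖ + ‖d n‖ := norm_le_norm_sub_add _ _
    _ ≤ 0 + ε := by linarith

namespace ContinuousLinearMap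

variable {E : Type*} [NormedAddCommGroup E] [Lattice E] [NormedSpace ℝ E] (f : E →L[ℝ] ℝ)

/-- For `0 ≤ x` this is `f⁺ x`, the Riesz–Kantorovich positive part of `f` evaluated at `x`. -/
noncomputable def supIcc (x : E) : ℝ :=
  sSup (f '' Icc 0 x)

theorem supIcc_le {x : E} {c : ℝ} (hx : 0 ≤ x) (h : ∀ y ∈ Icc 0 x, f y ≤ c) : f.supIcc x ≤ c :=
  csSup_le ((nonempty_Icc.2 hx).image f) (forall_mem_image.2 h)

variable [HasSolidNorm E] [IsOrderedAddMonoid E]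

theorem apply_le_opNorm_mul_of_mem_Icc {x y : E} (hy : y ∈ Icc 0 x) : f y ≤ ‖f‖ * ‖x‖ :=
  calc f y ≤ ‖f‖ * ‖y‖ := (le_abs_self _).trans (f.le_opNorm y)
    _ ≤ ‖f‖ * ‖x‖ := by
      gcongr
      exact HasSolidNorm.solid (abs_le_abs_of_nonneg hy.1 hy.2)

theorem le_supIcc {x y : E} (hy : y ∈ Icc 0 x) : f y ≤ f.supIcc x :=
  le_csSup ⟨_, forall_mem_image.2 fun _ => f.apply_le_opNorm_mul_of_mem_Icc⟩
    (mem_image_of_mem f hy)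

theorem supIcc_nonneg {x : E} (hx : 0 ≤ x) : 0 ≤ f.supIcc x := by
  simpa using f.le_supIcc ⟨le_rfl, hx⟩

theorem supIcc_le_opNorm_mul {x : E} (hx : 0 ≤ x) : f.supIcc x ≤ ‖f‖ * ‖x‖ :=
  f.supIcc_le hx fun _ => f.apply_le_opNorm_mul_of_mem_Icc

theorem supIcc_add {a b : E} (ha : 0 ≤ a) (hb : 0 ≤ b) :
    f.supIcc (a + b) = f.supIcc a + f.supIcc b := by
  apply le_antisymm
  · -- Riesz decomposition: `z ∈ [0, a + b]` splits as `z ⊓ a ∈ [0, a]` plus `z - z ⊓ a ∈ [0, b]`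
    refine f.supIcc_le (add_nonneg ha hb) fun z ⟨hz, hzab⟩ => ?_
    have hb' : z - z ⊓ a ≤ b := by
      rw [sub_inf, sub_self]
      exact sup_le hb (sub_le_iff_le_add.2 (by rwa [add_comm]))
    calc f z = f (z ⊓ a) + f (z - z ⊓ a) := by rw [← map_add, add_sub_cancel]
      _ ≤ f.supIcc a + f.supIcc b :=
        add_le_add (f.le_supIcc ⟨le_inf hz ha, inf_le_right⟩)
          (f.le_supIcc ⟨sub_nonneg.2 inf_le_left, hb'⟩)
  · rw [← le_sub_iff_add_le]
    refine f.supIcc_le ha fun y hy => ?_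
    rw [le_sub_comm]
    refine f.supIcc_le hb fun y' hy' => ?_
    rw [le_sub_iff_add_le', ← map_add]
    exact f.le_supIcc ⟨add_nonneg hy.1 hy'.1, add_le_add hy.2 hy'.2⟩

theorem supIcc_zero : f.supIcc 0 = 0 := by
  simpa using f.supIcc_add le_rfl le_rfl

theorem supIcc_posPart_sub_supIcc_negPart {a b : E} (ha : 0 ≤ a) (hb : 0 ≤ b) :
    f.supIcc (a - b)⁺ - f.supIcc (a - b)⁻ = f.supIcc a - f.supIcc b := by
  have h : (a - b)⁺ + b = a + (a - b)⁻ := sub_eq_sub_iff_add_eq_add.1 (posPart_sub_negPart _)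
  have := congrArg f.supIcc h
  rw [f.supIcc_add (posPart_nonneg _) hb, f.supIcc_add ha (negPart_nonneg _)] at this
  linarith

noncomputable def posPartAddHom : E →+ ℝ where
  toFun x := f.supIcc x⁺ - f.supIcc x⁻
  map_zero' := by simp
  map_add' x y := by
    have hxy : x + y = (x⁺ + y⁺) - (x⁻ + y⁻) := by
      rw [add_sub_add_comm, posPart_sub_negPart, posPart_sub_negPart]
    rw [hxy, f.supIcc_posPart_sub_supIcc_negPart
      (add_nonneg (posPart_nonneg x) (posPart_nonneg y))
      (add_nonneg (negPart_nonneg x) (negPart_nonneg y)),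
      f.supIcc_add (posPart_nonneg x) (posPart_nonneg y),
      f.supIcc_add (negPart_nonneg x) (negPart_nonneg y)]
    ring

theorem norm_posPartAddHom_le (x : E) : ‖f.posPartAddHom x‖ ≤ ‖f‖ * ‖x‖ := by
  have habs := f.supIcc_add (posPart_nonneg x) (negPart_nonneg x)
  rw [posPart_add_negPart] at habs
  have hle := f.supIcc_le_opNorm_mul (abs_nonneg x)
  rw [norm_abs_eq_norm] at hle
  have h₁ := f.supIcc_nonneg (posPart_nonneg x)
  have h₂ := f.supIcc_nonneg (negPart_nonneg x)
  change |f.supIcc x⁺ - f.supIcc x⁻| ≤ _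
  rw [abs_sub_le_iff]
  constructor <;> linarith

noncomputable def posPart : E →L[ℝ] ℝ :=
  f.posPartAddHom.toRealLinearMap
    (AddMonoidHomClass.continuous_of_bound _ ‖f‖ f.norm_posPartAddHom_le)

theorem posPart_apply_of_nonneg {x : E} (hx : 0 ≤ x) : f.posPart x = f.supIcc x := by
  simp [posPart, posPartAddHom, posPart_eq_self.2 hx, negPart_eq_zero.2 hx, supIcc_zero]

theorem exists_nonneg_abs_apply_le :
    ∃ g : E →L[ℝ] ℝ, (∀ x, 0 ≤ x → 0 ≤ g x) ∧ ∀ x, |f x| ≤ g |x| := by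
  set g := f.posPart + f.posPart - f
  have hg : ∀ v, 0 ≤ v → |f v| ≤ g v := fun v hv => by
    have h₁ := f.le_supIcc ⟨hv, le_rfl⟩
    have h₂ := f.supIcc_nonneg hv
    simp only [g, sub_apply, add_apply, f.posPart_apply_of_nonneg hv]
    rw [abs_le]
    constructor <;> linarith
  refine ⟨g, fun v hv => (abs_nonneg _).trans (hg v hv), fun x => ?_⟩
  calc |f x| = |f x⁺ - f x⁻| := by rw [← map_sub, posPart_sub_negPart]
    _ ≤ |f x⁺| + |f x⁻| := abs_sub _ _
    _ ≤ g x⁺ + g x⁻ := add_le_add (hg _ (posPart_nonneg x)) (hg _ (negPart_nonneg x))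
    _ = g |x| := by rw [← map_add, posPart_add_negPart]

end ContinuousLinearMap

section AbsWeakTopology

variable {E : Type*} [NormedAddCommGroup E] [Lattice E] [HasSolidNorm E] [IsOrderedAddMonoid E]
  [NormedSpace ℝ E]

theorem continuous_absWeak_of_abs_sub_le {φ : E → ℝ} {g : E →L[ℝ] ℝ}
    (hg : ∀ x, 0 ≤ x → 0 ≤ g x) (h : ∀ x y, |φ x - φ y| ≤ g |x - y|) :
    Continuous[absWeakTopology E, _] φ := by
  refine continuous_le_dom (iInf_le _ ⟨g, hg⟩) ?_
  refine @LipschitzWith.continuous E ℝ (absSeminormDist g hg).toPseudoEMetricSpace _ 1 φ ?_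
  refine @LipschitzWith.of_dist_le_mul E ℝ (absSeminormDist g hg) _ 1 φ fun x y => ?_
  rw [Real.dist_eq, NNReal.coe_one, one_mul]
  exact h x y

theorem ContinuousLinearMap.continuous_absWeak (f : E →L[ℝ] ℝ) :
    Continuous[absWeakTopology E, _] f := by
  obtain ⟨g, hg, hfg⟩ := f.exists_nonneg_abs_apply_le
  exact continuous_absWeak_of_abs_sub_le hg fun x y => by simpa only [map_sub] using hfg (x - y)

theorem Convex.isClosed_absWeak {s : Set E} (hconv : Convex ℝ s) (hs : IsClosed s) :
    IsClosed[absWeakTopology E] s := by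
  refine @isClosed_of_closure_subset _ (absWeakTopology E) _ fun x hx => ?_
  by_contra hxs
  obtain ⟨f, u, hfs, hfx⟩ := geometric_hahn_banach_closed_point hconv hs hxs
  obtain ⟨y, hy, hys⟩ := (@mem_closure_iff _ (absWeakTopology E) _ _).1 hx _
    (@Continuous.isOpen_preimage _ _ (absWeakTopology E) _ _ f.continuous_absWeak _ isOpen_Ioi)
    hfx
  exact (hfs y hys).not_gt hy

end AbsWeakTopology

theorem absWeakCompact_seqCompact_general {E : Type*} [NormedAddCommGroup E] [Lattice E] [HasSolidNorm E] [IsOrderedAddMonoid E] [NormedSpace ℝ E] (K : Set E)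
    (hK : @IsCompact E (absWeakTopology E) K) : @IsSeqCompact E (absWeakTopology E) K := by
  intro x hx
  set Y := (Submodule.span ℝ (range x)).topologicalClosure
  have hY : IsSeparable (Y : Set E) := by
    rw [Submodule.topologicalClosure_coe]
    exact (countable_range x).isSeparable.span.closure
  obtain ⟨g, hg⟩ := hY.exists_seq_strongDual_separating (𝕜 := ℝ)
  set Φ : E → ℕ → ℝ := fun v i => g i v
  have hΦ : Continuous[absWeakTopology E, _] Φ :=
    @continuous_pi _ _ _ (absWeakTopology E) _ _ fun i => (g i).continuous_absWeak
  have hinj : InjOn Φ Y := fun u hu v hv huv =>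
    sub_eq_zero.1 <| hg _ (Y.sub_mem hu hv) fun i => by
      simpa [map_sub, sub_eq_zero] using congrFun huv i
  obtain ⟨_, -, φ, hφ, hlim⟩ :=
    (@IsCompact.image _ _ (absWeakTopology E) _ _ _ hK hΦ).isSeqCompact fun n =>
      mem_image_of_mem Φ (hx n)
  have hxY : ∀ n, x n ∈ Y := fun n =>
    Submodule.le_topologicalClosure _ (Submodule.subset_span (mem_range_self n))
  obtain ⟨a, haK, ha⟩ := tendsto_of_isCompact_of_injOn (tX := absWeakTopology E) hK
    (Convex.isClosed_absWeak Y.convex (Submodule.isClosed_topologicalClosure _)) hΦ hinj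
    (.of_forall fun n => hx (φ n)) (.of_forall fun n => hxY (φ n)) hlim
  exact ⟨a, haK, φ, hφ, ha⟩

/-- Every absolutely weakly compact subset of a Banach lattice is absolutely weakly
sequentially compact. -/
theorem absWeakCompact_seqCompact {E : Type*} [NormedAddCommGroup E] [Lattice E] [HasSolidNorm E] [IsOrderedAddMonoid E] [NormedSpace ℝ E] [PosSMulStrictMono ℝ E] [CompleteSpace E] (K : Set E)
    (hK : @IsCompact E (absWeakTopology E) K) : @IsSeqCompact E (absWeakTopology E) K :=
  absWeakCompact_seqCompact_general K hK
end

section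
/- Let K be an absolutely weakly sequentially compact subset of a separable Banach lattice E. Then K is absolutely weakly compact. -/
set_option linter.unusedSectionVars false

open Filter Topology Pointwise MeasureTheory


/-!
Separability produces a strictly positive functional `f`: weight the positive norming functionals
of the moduli of a dense sequence by `2⁻ⁿ`. Then `d(x, y) = f |x - y|` is a metric whose topology is
coarser than `|σ|(E, E*)`, so `K` is `d`-sequentially compact and hence `d`-compact. On `K` the two
topologies agree: if `xₙ → x` for `d`, every subsequence has a further subsequence converging
absolutely weakly in `K`, and its limit is `x` because `d` separates points. Since `d` is metrizable,
this sequential comparison suffices.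
-/

section ComparableTopologies

variable {X : Type*} {t₁ t₂ : TopologicalSpace X} {K : Set X}

lemma IsSeqCompact.of_le_topology (h : t₁ ≤ t₂) (hK : @IsSeqCompact X t₁ K) :
    @IsSeqCompact X t₂ K :=
  fun _ hu =>
    let ⟨a, ha, φ, hφ, hlim⟩ := hK hu
    ⟨a, ha, φ, hφ, hlim.mono_right (nhds_mono h)⟩

lemma IsSeqCompact.tendsto_of_le_topology [@T2Space X t₂] (h : t₁ ≤ t₂)
    (hK : @IsSeqCompact X t₁ K) {u : ℕ → X} (hu : ∀ n, u n ∈ K) {x : X}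
    (hx : Tendsto u atTop (@nhds X t₂ x)) : Tendsto u atTop (@nhds X t₁ x) := by
  refine tendsto_of_subseq_tendsto fun ns hns => ?_
  obtain ⟨y, -, φ, hφ, hy⟩ := hK fun n => hu (ns n)
  let := t₂
  have hyx : y = x :=
    tendsto_nhds_unique (hy.mono_right (nhds_mono h)) (hx.comp (hns.comp hφ.tendsto_atTop))
  exact ⟨φ, hyx ▸ hy⟩

lemma IsSeqCompact.isCompact_of_le_topology [@TopologicalSpace.MetrizableSpace X t₂]
    (h : t₁ ≤ t₂) (hK : @IsSeqCompact X t₁ K) : @IsCompact X t₁ K := by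
  let := t₂
  have : CompactSpace K := isCompact_iff_compactSpace.mp (hK.of_le_topology h).isCompact
  have hval : Continuous[_, t₁] (Subtype.val : K → X) :=
    @SeqContinuous.continuous K X _ t₁ _ _ fun u x hu =>
      hK.tendsto_of_le_topology h (fun n => (u n).2) (continuous_subtype_val.seqContinuous hu)
  simpa using @isCompact_range _ _ _ t₁ _ _ hval

end ComparableTopologies

lemma exists_pos_functional_pos_of_exists_pos {F : Type*} [NormedAddCommGroup F]
    [NormedSpace ℝ F] [LE F] (G : ℕ → F →L[ℝ] ℝ) (hG : ∀ n, ‖G n‖ ≤ 1)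
    (hG_pos : ∀ n x, 0 ≤ x → 0 ≤ G n x) :
    ∃ f : F →L[ℝ] ℝ, (∀ x, 0 ≤ x → 0 ≤ f x) ∧ ∀ x n, 0 ≤ x → 0 < G n x → 0 < f x := by
  have hsum : Summable fun n => ((1 : ℝ) / 2) ^ n • G n := by
    refine summable_geometric_two.of_norm_bounded fun n => ?_
    rw [norm_smul, norm_pow, Real.norm_of_nonneg (by norm_num : (0 : ℝ) ≤ 1 / 2)]
    exact mul_le_of_le_one_right (by positivity) (hG n)
  have happly : ∀ x,
      HasSum (fun n => ((1 : ℝ) / 2) ^ n * G n x) ((∑' n, ((1 : ℝ) / 2) ^ n • G n) x) :=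
    fun x => by simpa using hsum.hasSum.mapL (ContinuousLinearMap.apply ℝ ℝ x)
  have hterm : ∀ x, 0 ≤ x → ∀ n, 0 ≤ ((1 : ℝ) / 2) ^ n * G n x :=
    fun x hx n => mul_nonneg (by positivity) (hG_pos n x hx)
  refine ⟨∑' n, ((1 : ℝ) / 2) ^ n • G n, fun x hx => (happly x).nonneg (hterm x hx),
    fun x n hx hn => ?_⟩
  rw [← (happly x).tsum_eq]
  exact (happly x).summable.tsum_pos (hterm x hx) n (mul_pos (by positivity) hn)

lemma metrizableSpace_absSeminormDist {E : Type*} [NormedAddCommGroup E] [Lattice E]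
    [IsOrderedAddMonoid E] [NormedSpace ℝ E] (f : E →L[ℝ] ℝ) (hf : ∀ x, 0 ≤ x → 0 ≤ f x)
    (hf_strict : ∀ x, x ≠ 0 → 0 < f |x|) :
    @TopologicalSpace.MetrizableSpace E (absSeminormDist f hf).toUniformSpace.toTopologicalSpace :=
  let : MetricSpace E :=
    { absSeminormDist f hf with
      eq_of_dist_eq_zero := fun {x y} h =>
        by_contra fun hne => (hf_strict (x - y) (sub_ne_zero.mpr hne)).ne' h }
  inferInstance

section BanachLattice

variable {E : Type*} [NormedAddCommGroup E] [Lattice E] [HasSolidNorm E] [IsOrderedAddMonoid E]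

lemma notMem_ball_add_Iic_of_nonneg {u : E} (hu : 0 ≤ u) :
    u ∉ Metric.ball (0 : E) ‖u‖ + Set.Iic (0 : E) := by
  rintro ⟨b, hb, y, hy, rfl⟩
  have hle : |b + y| ≤ |b| := by
    rw [abs_of_nonneg hu]
    exact (add_le_of_nonpos_right hy).trans (le_abs_self b)
  exact ((norm_le_norm_of_abs_le_abs hle).trans_lt (by simpa using hb)).false

variable [NormedSpace ℝ E]

lemma absWeakTopology_le (f : E →L[ℝ] ℝ) (hf : ∀ x, 0 ≤ x → 0 ≤ f x) :
    absWeakTopology E ≤ (absSeminormDist f hf).toUniformSpace.toTopologicalSpace :=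
  iInf_le _ (⟨f, hf⟩ : {f : E →L[ℝ] ℝ // ∀ x, 0 ≤ x → 0 ≤ f x})

lemma apply_abs_pos_of_norm_sub_lt {g : E →L[ℝ] ℝ} (hg : ‖g‖ ≤ 1) {v x : E}
    (hv : g |v| = ‖v‖) (hxv : ‖x - v‖ < ‖x‖ / 2) : 0 < g |x| := by
  have happrox : ‖g (|v| - |x|)‖ ≤ ‖x - v‖ :=
    calc ‖g (|v| - |x|)‖ ≤ 1 * ‖|v| - |x|‖ := g.le_of_opNorm_le hg _
      _ ≤ ‖x - v‖ := by rw [one_mul, norm_sub_rev x v]; exact norm_abs_sub_abs v x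
  have hvx : ‖x‖ - ‖v‖ ≤ ‖x - v‖ := norm_sub_norm_le x v
  rw [map_sub, Real.norm_eq_abs] at happrox
  linarith [le_abs_self (g |v| - g |x|)]

variable [PosSMulMono ℝ E]

/-- Hahn–Banach separation of `u` from the open convex set `ball 0 ‖u‖ + {y ≤ 0}`. -/
lemma exists_pos_dual_vector {u : E} (hu : 0 ≤ u) :
    ∃ g : E →L[ℝ] ℝ, (∀ x, 0 ≤ x → 0 ≤ g x) ∧ ‖g‖ ≤ 1 ∧ g u = ‖u‖ := by
  rcases eq_or_ne u 0 with rfl | hu0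
  · exact ⟨0, fun _ _ => le_rfl, by simp, by simp⟩
  have hr : 0 < ‖u‖ := norm_pos_iff.mpr hu0
  obtain ⟨g, hg⟩ := geometric_hahn_banach_open_point
    ((convex_ball 0 ‖u‖).add (convex_Iic (0 : E))) Metric.isOpen_ball.add_right
    (notMem_ball_add_Iic_of_nonneg hu)
  have hball : ∀ b ∈ Metric.ball (0 : E) ‖u‖, g b < g u := fun b hb =>
    hg b ⟨b, hb, 0, le_rfl, add_zero b⟩
  have hcone : ∀ y ≤ (0 : E), g y < g u := fun y hy =>
    hg y ⟨0, Metric.mem_ball_self hr, y, hy, zero_add y⟩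
  have hgu : 0 < g u := by simpa using hcone 0 le_rfl
  have hpos : ∀ x, 0 ≤ x → 0 ≤ g x := by
    intro x hx
    by_contra! hgx
    have := hcone ((g u / g x) • x) (smul_nonpos_of_nonpos_of_nonneg
      (div_nonpos_of_nonneg_of_nonpos hgu.le hgx.le) hx)
    rw [map_smul, smul_eq_mul, div_mul_cancel₀ _ hgx.ne] at this
    exact this.false
  have hclosedBall : ∀ b ∈ Metric.closedBall (0 : E) ‖u‖, g b ≤ g u := by
    rw [← closure_ball 0 hr.ne']
    exact closure_minimal (fun b hb => (hball b hb).le) (isClosed_le g.continuous continuous_const)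
  have hnorm : ‖g‖ ≤ g u / ‖u‖ := by
    refine g.opNorm_bound_of_ball_bound hr (g u) fun b hb => abs_le.mpr ⟨?_, hclosedBall b hb⟩
    simpa [neg_le] using hclosedBall (-b) (by simpa using hb)
  refine ⟨(‖u‖ / g u) • g, fun x hx => ?_, ?_, ?_⟩
  · simpa using mul_nonneg (div_nonneg hr.le hgu.le) (hpos x hx)
  · calc ‖(‖u‖ / g u) • g‖ = ‖u‖ / g u * ‖g‖ := by
          rw [norm_smul, Real.norm_of_nonneg (div_nonneg hr.le hgu.le)]
      _ ≤ ‖u‖ / g u * (g u / ‖u‖) := by gcongr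
      _ = 1 := by field_simp
  · simp [hgu.ne']

lemma exists_strictly_pos_functional [TopologicalSpace.SeparableSpace E] :
    ∃ f : E →L[ℝ] ℝ, (∀ x, 0 ≤ x → 0 ≤ f x) ∧ ∀ x, x ≠ 0 → 0 < f |x| := by
  obtain ⟨d, hd⟩ := TopologicalSpace.exists_dense_seq E
  choose G hG_pos hG_norm hG_apply using fun n => exists_pos_dual_vector (abs_nonneg (d n))
  obtain ⟨f, hf, hfG⟩ := exists_pos_functional_pos_of_exists_pos G hG_norm hG_pos
  refine ⟨f, hf, fun x hx => ?_⟩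
  obtain ⟨n, hn⟩ := hd.exists_dist_lt x (half_pos (norm_pos_iff.mpr hx))
  rw [dist_eq_norm] at hn
  exact hfG |x| n (abs_nonneg x)
    (apply_abs_pos_of_norm_sub_lt (hG_norm n) ((hG_apply n).trans (norm_abs_eq_norm _)) hn)

end BanachLattice

theorem absWeakSeqCompact_compact_of_separable_general {E : Type*} [NormedAddCommGroup E] [Lattice E] [HasSolidNorm E] [IsOrderedAddMonoid E] [NormedSpace ℝ E] [PosSMulStrictMono ℝ E]
    [TopologicalSpace.SeparableSpace E] (K : Set E)
    (hK : @IsSeqCompact E (absWeakTopology E) K) : @IsCompact E (absWeakTopology E) K := by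
  obtain ⟨f, hf, hf_strict⟩ := exists_strictly_pos_functional (E := E)
  have := metrizableSpace_absSeminormDist f hf hf_strict
  exact hK.isCompact_of_le_topology (absWeakTopology_le f hf)

/-- An absolutely weakly sequentially compact subset of a separable Banach lattice is
absolutely weakly compact. -/
theorem absWeakSeqCompact_compact_of_separable {E : Type*} [NormedAddCommGroup E] [Lattice E] [HasSolidNorm E] [IsOrderedAddMonoid E] [NormedSpace ℝ E] [PosSMulStrictMono ℝ E] [PosSMulReflectLT ℝ E] [CompleteSpace E]
    [TopologicalSpace.SeparableSpace E] (K : Set E)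
    (hK : @IsSeqCompact E (absWeakTopology E) K) : @IsCompact E (absWeakTopology E) K :=
  absWeakSeqCompact_compact_of_separable_general K hK
end

section
/- For an uncountable set Γ and 1 < p < ∞, the closed unit ball of ℓ_p(Γ) is compact in the absolute weak topology |σ|(ℓ_p(Γ), ℓ_q(Γ)), where 1/p + 1/q = 1. -/
set_option linter.unusedSectionVars false

open Filter Topology Pointwise MeasureTheory
open scoped ENNReal


/-!
Coordinatewise convergence of a bounded filter in `ℓ_p(Γ)` already implies absolute weak
convergence. A positive functional `f` is the weight `g γ = f e_γ ≥ 0` (the finitely supported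
vectors are dense), and `g ∈ ℓ_q`. Hence `f |x - z| = ∑ γ, |x γ - z γ| g γ`, and by Hölder the part
of this sum outside a finite set `s` is at most `‖x - z‖ ‖g‖_{ℓ_q(Γ ∖ s)}`, which is uniformly small
for `s` large, while the finitely many terms in `s` tend to `0`. An ultrafilter on the unit ball
converges coordinatewise (each coordinate lies in `[-1, 1]`) to a point which, by Fatou, lies in
the ball, and therefore converges to it in the absolute weak topology.
-/

theorem Real.sum_rpow_le_of_forall_sum_mul_le {ι : Type*} (s : Finset ι) {p q : ℝ}
    (hpq : p.HolderConjugate q) {g : ι → ℝ} (hg : ∀ i, 0 ≤ g i) {C : ℝ} (hC : 0 ≤ C)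
    (h : ∀ a : ι → ℝ, ∑ i ∈ s, a i * g i ≤ C * (∑ i ∈ s, |a i| ^ p) ^ (1 / p)) :
    ∑ i ∈ s, g i ^ q ≤ C ^ q := by
  set A := ∑ i ∈ s, g i ^ q
  have hA : 0 ≤ A := Finset.sum_nonneg fun i _ => Real.rpow_nonneg (hg i) q
  -- `a = g ^ (q - 1)` is the vector for which Hölder's inequality is an equality
  have htest := h fun i => g i ^ (q - 1)
  have hmul (i : ι) : g i ^ (q - 1) * g i = g i ^ q := by
    rw [← Real.rpow_add_one' (hg i) (by linarith [hpq.symm.lt]), sub_add_cancel]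
  have hpow (i : ι) : |g i ^ (q - 1)| ^ p = g i ^ q := by
    rw [abs_of_nonneg (Real.rpow_nonneg (hg i) _), ← Real.rpow_mul (hg i),
      hpq.symm.sub_one_mul_conj]
  simp_rw [hmul, hpow] at htest
  rcases hA.eq_or_lt with hA₀ | hA₀
  · rw [← hA₀]; exact Real.rpow_nonneg hC q
  have hsplit : A ^ (1 / q) * A ^ (1 / p) = A := by
    rw [← Real.rpow_add hA₀, one_div, one_div, add_comm, hpq.inv_add_inv_eq_one, Real.rpow_one]
  have hroot : A ^ (1 / q) ≤ C :=
    le_of_mul_le_mul_right (hsplit.trans_le htest) (Real.rpow_pos_of_pos hA₀ _)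
  calc A = (A ^ (1 / q)) ^ q := by
        rw [← Real.rpow_mul hA, one_div_mul_cancel hpq.symm.ne_zero, Real.rpow_one]
    _ ≤ C ^ q := Real.rpow_le_rpow (Real.rpow_nonneg hA _) hroot hpq.symm.nonneg

theorem ENNReal.toReal_pos_of_one_le {p : ℝ≥0∞} (h : 1 ≤ p) (hp : p ≠ ∞) : 0 < p.toReal :=
  ENNReal.toReal_pos (zero_lt_one.trans_le h).ne' hp

theorem ENNReal.ne_top_of_holderConjugate_toReal {p : ℝ≥0∞} {q : ℝ}
    (hpq : p.toReal.HolderConjugate q) : p ≠ ∞ := by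
  rintro rfl
  exact hpq.ne_zero rfl

theorem le_nhds_absWeakTopology_iff {E : Type*} [NormedAddCommGroup E] [Lattice E]
    [HasSolidNorm E] [IsOrderedAddMonoid E] [NormedSpace ℝ E] {F : Filter E} {z : E} :
    F ≤ @nhds E (absWeakTopology E) z ↔
      ∀ f : E →L[ℝ] ℝ, (∀ x, 0 ≤ x → 0 ≤ f x) → Tendsto (fun x => f |x - z|) F (𝓝 0) := by
  rw [absWeakTopology, nhds_iInf, le_iInf_iff, Subtype.forall]
  refine forall₂_congr fun f hf => ?_
  let := absSeminormDist f hf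
  exact tendsto_iff_dist_tendsto_zero (f := id)

namespace MeasureTheory.Lp

section Count

variable {Γ : Type*} [MeasurableSpace Γ] [MeasurableSingletonClass Γ] {p : ℝ≥0∞}

lemma eLpNorm_count_rpow_toReal {f : Γ → ℝ} (hp₀ : p ≠ 0) (hp : p ≠ ∞) :
    eLpNorm f p Measure.count ^ p.toReal = ∑' γ, ENNReal.ofReal (|f γ| ^ p.toReal) := by
  have hp_pos : 0 < p.toReal := ENNReal.toReal_pos hp₀ hp
  rw [eLpNorm_eq_lintegral_rpow_enorm_toReal hp₀ hp, lintegral_count,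
    ← ENNReal.rpow_mul, one_div_mul_cancel hp_pos.ne', ENNReal.rpow_one]
  simp_rw [Real.enorm_eq_ofReal_abs, ENNReal.ofReal_rpow_of_nonneg (abs_nonneg _) hp_pos.le]

variable [Fact (1 ≤ p)]

local notation "ℓ_p" => Lp ℝ p (Measure.count : Measure Γ)

lemma add_apply_count (w v : ℓ_p) (γ : Γ) : (w + v) γ = w γ + v γ :=
  Measure.ae_count_iff.1 (Lp.coeFn_add w v) γ

lemma sub_apply_count (w v : ℓ_p) (γ : Γ) : (w - v) γ = w γ - v γ :=
  Measure.ae_count_iff.1 (Lp.coeFn_sub w v) γ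

lemma smul_apply_count (a : ℝ) (w : ℓ_p) (γ : Γ) : (a • w) γ = a * w γ :=
  Measure.ae_count_iff.1 (Lp.coeFn_smul a w) γ

lemma abs_apply_count (w : ℓ_p) (γ : Γ) : |w| γ = |w γ| :=
  Measure.ae_count_iff.1 (Lp.coeFn_abs w) γ

lemma sum_apply_count {ι : Type*} (s : Finset ι) (w : ι → ℓ_p) (γ : Γ) :
    (∑ i ∈ s, w i) γ = ∑ i ∈ s, w i γ := by
  have h := map_sum (AddMonoidHom.mk' (fun w : ℓ_p => (⇑w : Γ → ℝ))
    fun w v => funext (add_apply_count w v)) w s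
  exact (congrFun h γ).trans (Finset.sum_apply γ s _)

lemma nonneg_iff_count {w : ℓ_p} : 0 ≤ w ↔ ∀ γ, 0 ≤ w γ := by
  rw [← Lp.coeFn_nonneg, EventuallyLE, Measure.ae_count_iff]
  rfl

lemma abs_apply_le_norm_count (w : ℓ_p) (γ : Γ) : |w γ| ≤ ‖w‖ := by
  have h := enorm_le_eLpNorm_count (p := p) w γ (zero_lt_one.trans_le Fact.out).ne'
  rw [← Real.norm_eq_abs, ← toReal_enorm, Lp.norm_def]
  exact ENNReal.toReal_mono (Lp.eLpNorm_ne_top w) h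

lemma hasSum_rpow_abs_apply_count (hp : p ≠ ∞) (w : ℓ_p) :
    HasSum (fun γ => |w γ| ^ p.toReal) (‖w‖ ^ p.toReal) := by
  have hsum := eLpNorm_count_rpow_toReal (f := ⇑w) (zero_lt_one.trans_le Fact.out).ne' hp
  have hfin : ∑' γ, ENNReal.ofReal (|w γ| ^ p.toReal) ≠ ∞ := by
    rw [← hsum]
    exact ENNReal.rpow_ne_top_of_nonneg ENNReal.toReal_nonneg (Lp.eLpNorm_ne_top w)
  have hnorm : ‖w‖ ^ p.toReal = ∑' γ, |w γ| ^ p.toReal := by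
    rw [Lp.norm_def, ENNReal.toReal_rpow, hsum, ENNReal.tsum_toReal_eq (by simp)]
    simp [Real.rpow_nonneg]
  rw [hnorm]
  simpa [Real.rpow_nonneg] using (ENNReal.summable_toReal hfin).hasSum

lemma memLp_count_of_summable (hp : p ≠ ∞) {L : Γ → ℝ}
    (hL : Summable fun γ => |L γ| ^ p.toReal) : MemLp L p Measure.count := by
  have hp_pos := ENNReal.toReal_pos_of_one_le Fact.out hp
  have hsupp : {γ | (0 : Γ → ℝ) γ ≠ L γ}.Countable := hL.countable_support.mono fun γ hγ => by
    simpa [Real.rpow_eq_zero (abs_nonneg _) hp_pos.ne'] using Ne.symm hγ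
  refine ⟨(measurable_zero.measurable_of_countable_ne hsupp).aestronglyMeasurable, ?_⟩
  rw [← ENNReal.rpow_lt_top_iff_of_pos hp_pos,
    eLpNorm_count_rpow_toReal (zero_lt_one.trans_le Fact.out).ne' hp,
    ← ENNReal.ofReal_tsum_of_nonneg (fun γ => Real.rpow_nonneg (abs_nonneg _) _) hL]
  exact ENNReal.ofReal_lt_top

lemma exists_apply_eq_of_tendsto_apply (hp : p ≠ ∞) {F : Filter ℓ_p} [F.NeBot] {L : Γ → ℝ}
    {R : ℝ} (hR : ∀ᶠ x in F, ‖x‖ ≤ R) (hL : ∀ γ, Tendsto (fun x : ℓ_p => x γ) F (𝓝 (L γ))) :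
    ∃ z : ℓ_p, (∀ γ, z γ = L γ) ∧ ‖z‖ ≤ R := by
  have hp_pos := ENNReal.toReal_pos_of_one_le Fact.out hp
  have hR₀ : 0 ≤ R := let ⟨x, hx⟩ := hR.exists; (norm_nonneg x).trans hx
  have hsum_le (s : Finset Γ) : ∑ γ ∈ s, |L γ| ^ p.toReal ≤ R ^ p.toReal := by
    refine le_of_tendsto (tendsto_finsetSum s fun γ _ => (hL γ).abs.rpow_const (Or.inr hp_pos.le))
      (hR.mono fun x hx => ?_)
    exact (sum_le_hasSum s (fun γ _ => Real.rpow_nonneg (abs_nonneg _) _)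
      (hasSum_rpow_abs_apply_count hp x)).trans (Real.rpow_le_rpow (norm_nonneg _) hx hp_pos.le)
  have hmem := memLp_count_of_summable hp
    (summable_of_sum_le (fun γ => Real.rpow_nonneg (abs_nonneg _) _) hsum_le)
  have hz : ∀ γ, hmem.toLp L γ = L γ := Measure.ae_count_iff.1 (MemLp.coeFn_toLp hmem)
  refine ⟨hmem.toLp L, hz, (Real.rpow_le_rpow_iff (norm_nonneg _) hR₀ hp_pos).1 ?_⟩
  have hnorm := hasSum_rpow_abs_apply_count hp (hmem.toLp L)
  simp_rw [hz] at hnorm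
  exact hasSum_le_of_sum_le hnorm hsum_le

variable (p) in
noncomputable def countSingle (γ : Γ) : ℓ_p :=
  indicatorConstLp p (measurableSet_singleton γ) (by simp) 1

lemma countSingle_apply [DecidableEq Γ] (γ γ' : Γ) :
    countSingle p γ γ' = (Pi.single γ 1 : Γ → ℝ) γ' := by
  rw [countSingle, Measure.ae_count_iff.1 indicatorConstLp_coeFn γ', Set.indicator_singleton]

lemma countSingle_nonneg (γ : Γ) : 0 ≤ countSingle p γ := by
  classical
  refine nonneg_iff_count.2 fun γ' => ?_
  rw [countSingle_apply]
  exact (Pi.single_nonneg (α := fun _ => ℝ)).2 zero_le_one γ'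

lemma sum_smul_countSingle_apply [DecidableEq Γ] (s : Finset Γ) (a : Γ → ℝ) (γ' : Γ) :
    (∑ γ ∈ s, a γ • countSingle p γ) γ' = if γ' ∈ s then a γ' else 0 := by
  rw [sum_apply_count]
  simp_rw [smul_apply_count, countSingle_apply, Pi.single_apply]
  simp

lemma norm_sum_smul_countSingle_rpow (hp : p ≠ ∞) (s : Finset Γ) (a : Γ → ℝ) :
    ‖∑ γ ∈ s, a γ • countSingle p γ‖ ^ p.toReal = ∑ γ ∈ s, |a γ| ^ p.toReal := by
  classical
  refine (hasSum_rpow_abs_apply_count hp _).unique ?_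
  simp_rw [sum_smul_countSingle_apply, apply_ite (fun t : ℝ => |t| ^ p.toReal), abs_zero,
    Real.zero_rpow (ENNReal.toReal_pos_of_one_le Fact.out hp).ne']
  convert hasSum_sum_of_ne_finset_zero (L := .unconditional Γ) (s := s) (fun γ hγ => if_neg hγ)
    using 1
  exact (Finset.sum_congr rfl fun γ hγ => if_pos hγ).symm

lemma hasSum_smul_countSingle (hp : p ≠ ∞) (w : ℓ_p) :
    HasSum (fun γ => w γ • countSingle p γ) w := by
  classical
  have hp_pos := ENNReal.toReal_pos_of_one_le Fact.out hp
  have tail (s : Finset Γ) : ‖w - ∑ γ ∈ s, w γ • countSingle p γ‖ ^ p.toReal =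
      ∑' γ : {γ // γ ∉ s}, |w γ| ^ p.toReal := by
    have h := hasSum_rpow_abs_apply_count hp (w - ∑ γ ∈ s, w γ • countSingle p γ)
    have hcoord : (fun γ => |(w - ∑ γ ∈ s, w γ • countSingle p γ) γ| ^ p.toReal) =
        ((s : Set Γ)ᶜ).indicator (fun γ => |w γ| ^ p.toReal) := by
      funext γ
      rw [sub_apply_count, sum_smul_countSingle_apply]
      by_cases hγ : γ ∈ s <;> simp [hγ, Real.zero_rpow hp_pos.ne']
    rw [hcoord, ← hasSum_subtype_iff_indicator] at h
    exact h.tsum_eq.symm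
  rw [HasSum, tendsto_iff_norm_sub_tendsto_zero]
  simp_rw [norm_sub_rev _ w]
  have h := (tendsto_tsum_compl_atTop_zero fun γ => |w γ| ^ p.toReal).rpow_const
    (Or.inr (one_div_pos.2 hp_pos).le)
  rw [Real.zero_rpow (one_div_pos.2 hp_pos).ne'] at h
  refine h.congr fun s => ?_
  rw [← tail, ← Real.rpow_mul (norm_nonneg _), mul_one_div_cancel hp_pos.ne', Real.rpow_one]

lemma hasSum_apply_mul_map_countSingle (hp : p ≠ ∞) (f : ℓ_p →L[ℝ] ℝ) (w : ℓ_p) :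
    HasSum (fun γ => w γ * f (countSingle p γ)) (f w) := by
  simpa using (hasSum_smul_countSingle hp w).mapL f

lemma sum_map_countSingle_rpow_le {q : ℝ} (hpq : p.toReal.HolderConjugate q)
    (f : ℓ_p →L[ℝ] ℝ) (hf : ∀ x, 0 ≤ x → 0 ≤ f x) (s : Finset Γ) :
    ∑ γ ∈ s, f (countSingle p γ) ^ q ≤ ‖f‖ ^ q := by
  have hp := ENNReal.ne_top_of_holderConjugate_toReal hpq
  refine Real.sum_rpow_le_of_forall_sum_mul_le s hpq (fun γ => hf _ (countSingle_nonneg γ))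
    (norm_nonneg f) fun a => ?_
  have hnorm : ‖∑ γ ∈ s, a γ • countSingle p γ‖ =
      (∑ γ ∈ s, |a γ| ^ p.toReal) ^ (1 / p.toReal) := by
    rw [← norm_sum_smul_countSingle_rpow hp, ← Real.rpow_mul (norm_nonneg _),
      mul_one_div_cancel hpq.ne_zero, Real.rpow_one]
  calc ∑ γ ∈ s, a γ * f (countSingle p γ) = f (∑ γ ∈ s, a γ • countSingle p γ) := by simp
    _ ≤ ‖f‖ * ‖∑ γ ∈ s, a γ • countSingle p γ‖ := (le_abs_self _).trans (f.le_opNorm _)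
    _ = _ := by rw [hnorm]

lemma summable_map_countSingle_rpow {q : ℝ} (hpq : p.toReal.HolderConjugate q)
    (f : ℓ_p →L[ℝ] ℝ) (hf : ∀ x, 0 ≤ x → 0 ≤ f x) :
    Summable fun γ => f (countSingle p γ) ^ q :=
  summable_of_sum_le (fun γ => Real.rpow_nonneg (hf _ (countSingle_nonneg γ)) q)
    (sum_map_countSingle_rpow_le hpq f hf)

lemma map_le_sum_add_norm_mul_tsum_compl {q : ℝ} (hpq : p.toReal.HolderConjugate q)
    (f : ℓ_p →L[ℝ] ℝ) (hf : ∀ x, 0 ≤ x → 0 ≤ f x) (s : Finset Γ) {u : ℓ_p} (hu : 0 ≤ u) :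
    f u ≤ ∑ γ ∈ s, u γ * f (countSingle p γ) +
      ‖u‖ * (∑' γ : {γ // γ ∉ s}, f (countSingle p γ) ^ q) ^ (1 / q) := by
  have hp := ENNReal.ne_top_of_holderConjugate_toReal hpq
  have hu' : ∀ γ, 0 ≤ u γ := nonneg_iff_count.1 hu
  have hg : ∀ γ, 0 ≤ f (countSingle p γ) := fun γ => hf _ (countSingle_nonneg γ)
  have hsum := hasSum_apply_mul_map_countSingle hp f u
  have hnorm := hasSum_rpow_abs_apply_count hp u
  simp_rw [abs_of_nonneg (hu' _)] at hnorm
  have hroot : (∑' γ : {γ // γ ∉ s}, u γ ^ p.toReal) ^ (1 / p.toReal) ≤ ‖u‖ := by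
    calc (∑' γ : {γ // γ ∉ s}, u γ ^ p.toReal) ^ (1 / p.toReal)
        ≤ (‖u‖ ^ p.toReal) ^ (1 / p.toReal) := by
          refine Real.rpow_le_rpow (tsum_nonneg fun γ => Real.rpow_nonneg (hu' γ.1) _) ?_
            (one_div_nonneg.2 hpq.nonneg)
          rw [← hnorm.tsum_eq]
          exact hnorm.summable.tsum_subtype_le _ {γ | γ ∉ s} fun γ => Real.rpow_nonneg (hu' γ) _
      _ = ‖u‖ := by
          rw [← Real.rpow_mul (norm_nonneg u), mul_one_div_cancel hpq.ne_zero, Real.rpow_one]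
  rw [← hsum.tsum_eq, ← hsum.summable.sum_add_tsum_compl (s := s)]
  refine (add_le_add_iff_left _).2 ?_
  calc ∑' γ : {γ // γ ∉ s}, u γ * f (countSingle p γ)
      ≤ (∑' γ : {γ // γ ∉ s}, u γ ^ p.toReal) ^ (1 / p.toReal) *
          (∑' γ : {γ // γ ∉ s}, f (countSingle p γ) ^ q) ^ (1 / q) :=
        Real.inner_le_Lp_mul_Lq_tsum_of_nonneg hpq (fun γ => hu' γ.1) (fun γ => hg γ.1)
          (hnorm.summable.subtype _) ((summable_map_countSingle_rpow hpq f hf).subtype _)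
    _ ≤ ‖u‖ * (∑' γ : {γ // γ ∉ s}, f (countSingle p γ) ^ q) ^ (1 / q) :=
        mul_le_mul_of_nonneg_right hroot (Real.rpow_nonneg
          (tsum_nonneg fun γ : {γ // γ ∉ s} => Real.rpow_nonneg (hg γ) q) _)

theorem tendsto_map_abs_sub_of_tendsto_apply (hp : 1 < p) (hp' : p ≠ ∞) {F : Filter ℓ_p}
    {z : ℓ_p} {R : ℝ} (hR : ∀ᶠ x in F, ‖x - z‖ ≤ R)
    (hF : ∀ γ, Tendsto (fun x : ℓ_p => x γ) F (𝓝 (z γ)))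
    (f : ℓ_p →L[ℝ] ℝ) (hf : ∀ x, 0 ≤ x → 0 ≤ f x) :
    Tendsto (fun x => f |x - z|) F (𝓝 0) := by
  have hpq : p.toReal.HolderConjugate p.toReal.conjExponent :=
    .conjExponent (by simpa using ENNReal.toReal_strict_mono hp' hp)
  set q := p.toReal.conjExponent
  have hq : 0 < 1 / q := one_div_pos.2 hpq.symm.pos
  set T : Finset Γ → ℝ := fun s => (∑' γ : {γ // γ ∉ s}, f (countSingle p γ) ^ q) ^ (1 / q)
  have hT : Tendsto (fun s => R * T s) atTop (𝓝 0) := by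
    have h := (tendsto_tsum_compl_atTop_zero fun γ => f (countSingle p γ) ^ q).rpow_const
      (Or.inr hq.le)
    have hRT := h.const_mul R
    rwa [Real.zero_rpow hq.ne', mul_zero] at hRT
  refine tendsto_order.2 ⟨fun a ha => .of_forall fun x => ha.trans_le (hf _ (abs_nonneg _)),
    fun ε hε => ?_⟩
  obtain ⟨s, hs⟩ := (hT.eventually (gt_mem_nhds (half_pos hε))).exists
  have hfin : Tendsto (fun x : ℓ_p => ∑ γ ∈ s, |x - z| γ * f (countSingle p γ)) F (𝓝 0) := by
    simp_rw [abs_apply_count, sub_apply_count]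
    simpa using tendsto_finsetSum s fun γ _ =>
      ((hF γ).sub_const (z γ)).abs.mul_const (f (countSingle p γ))
  filter_upwards [hR, hfin.eventually (gt_mem_nhds (half_pos hε))] with x hxR hx
  have hTs : 0 ≤ T s := Real.rpow_nonneg (tsum_nonneg fun γ : {γ // γ ∉ s} =>
    Real.rpow_nonneg (hf _ (countSingle_nonneg γ.1)) q) _
  calc f |x - z| ≤ ∑ γ ∈ s, |x - z| γ * f (countSingle p γ) + ‖|x - z|‖ * T s :=
        map_le_sum_add_norm_mul_tsum_compl hpq f hf s (abs_nonneg _)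
    _ ≤ ∑ γ ∈ s, |x - z| γ * f (countSingle p γ) + R * T s := by
        rw [norm_abs_eq_norm]; gcongr
    _ < ε / 2 + ε / 2 := add_lt_add hx hs
    _ = ε := add_halves ε

end Count

end MeasureTheory.Lp

theorem lp_unitBall_absWeakCompact_general (Γ : Type*) [MeasurableSpace Γ] [MeasurableSingletonClass Γ]
    (p : ℝ≥0∞) [Fact (1 ≤ p)] (hp : 1 < p) (hp' : p ≠ ∞) :
    @IsCompact (Lp ℝ p (Measure.count : Measure Γ))
      (absWeakTopology (Lp ℝ p (Measure.count : Measure Γ)))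
      (Metric.closedBall 0 1) := by
  refine (@isCompact_iff_ultrafilter_le_nhds _ (absWeakTopology _) _).2 fun F hF => ?_
  have hball : ∀ᶠ x in (F : Filter (Lp ℝ p (Measure.count : Measure Γ))), ‖x‖ ≤ 1 := by
    filter_upwards [le_principal_iff.1 hF] with x hx using mem_closedBall_zero_iff.1 hx
  have hcoord (γ : Γ) :
      ∃ l, Tendsto (fun x : Lp ℝ p (Measure.count : Measure Γ) => x γ) F (𝓝 l) := by
    obtain ⟨l, -, hl⟩ := isCompact_Icc.ultrafilter_le_nhds (F.map fun x => x γ) <| by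
      rw [Ultrafilter.coe_map, le_principal_iff]
      exact hball.mono fun x hx => abs_le.1 ((Lp.abs_apply_le_norm_count x γ).trans hx)
    exact ⟨l, hl⟩
  choose L hL using hcoord
  obtain ⟨z, hz, hz₁⟩ := Lp.exists_apply_eq_of_tendsto_apply hp' hball hL
  refine ⟨z, mem_closedBall_zero_iff.2 hz₁, le_nhds_absWeakTopology_iff.2 fun f hf => ?_⟩
  refine Lp.tendsto_map_abs_sub_of_tendsto_apply hp hp' (R := 2) ?_ (fun γ => hz γ ▸ hL γ) f hf
  filter_upwards [hball] with x hx
  linarith [norm_sub_le x z]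

/-- For an uncountable set `Γ` and `1 < p < ∞`, the closed unit ball of `ℓ_p(Γ)` (realized as
the `Lp` space of the counting measure on `Γ`) is compact in the absolute weak topology. -/
theorem lp_unitBall_absWeakCompact (Γ : Type*) [MeasurableSpace Γ] [MeasurableSingletonClass Γ]
    [Uncountable Γ] (p : ℝ≥0∞) [Fact (1 ≤ p)] (hp : 1 < p) (hp' : p ≠ ∞) :
    @IsCompact (Lp ℝ p (Measure.count : Measure Γ))
      (absWeakTopology (Lp ℝ p (Measure.count : Measure Γ)))
      (Metric.closedBall 0 1) :=
  lp_unitBall_absWeakCompact_general Γ p hp hp'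
end

section
/- A Banach lattice E has the positive Schur property if and only if every absolutely weakly null sequence in E is norm null. -/
set_option linter.unusedSectionVars false

open Filter Topology Pointwise MeasureTheory


/-!
On positive sequences absolute weak and weak convergence to `0` agree, since `|x n| = x n`.
Conversely, if `x` is absolutely weakly null then every positive functional tends to `0` along
`|x n|`, hence so does every functional: by Riesz decomposition, the Riesz–Kantorovich formula
`f⁺ x = sup {f y | 0 ≤ y ≤ x}` is additive on the positive cone and extends to a positive functional
`f⁺ ≥ f`, so `f = f⁺ - (f⁺ - f)` is a difference of positive functionals. The positive Schur
property then applies to `|x n|`, which has the norm of `x n`.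
-/

section LatticeOrderedGroup

variable {α β : Type*} [AddCommGroup α] [Lattice α] [IsOrderedAddMonoid α] [AddCommGroup β]

theorem exists_add_eq_of_le_add {x y z : α} (hx : 0 ≤ x) (hy : 0 ≤ y) (hz : 0 ≤ z)
    (h : z ≤ x + y) : ∃ a ∈ Set.Icc 0 x, ∃ b ∈ Set.Icc 0 y, z = a + b := by
  refine ⟨z ⊓ x, ⟨le_inf hz hx, inf_le_right⟩, z - z ⊓ x, ⟨sub_nonneg.2 inf_le_left, ?_⟩,
    (add_sub_cancel _ _).symm⟩
  rw [sub_inf, sub_self]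
  exact sup_le hy (sub_le_iff_le_add'.2 h)

def addMonoidHomOfAddOnNonneg (s : α → β) (hs : ∀ x y, 0 ≤ x → 0 ≤ y → s (x + y) = s x + s y) :
    α →+ β where
  toFun x := s x⁺ - s x⁻
  map_zero' := by simp
  map_add' x y := by
    have key : (x + y)⁺ + (x⁻ + y⁻) = (x⁺ + y⁺) + (x + y)⁻ :=
      sub_eq_sub_iff_add_eq_add.1 <| by
        rw [posPart_sub_negPart, add_sub_add_comm, posPart_sub_negPart, posPart_sub_negPart]
    have h := congrArg s key
    rw [hs _ _ (posPart_nonneg _) (add_nonneg (negPart_nonneg _) (negPart_nonneg _)),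
      hs _ _ (add_nonneg (posPart_nonneg _) (posPart_nonneg _)) (negPart_nonneg _),
      hs _ _ (negPart_nonneg _) (negPart_nonneg _), hs _ _ (posPart_nonneg _) (posPart_nonneg _)] at h
    rw [← add_sub_add_comm]
    exact sub_eq_sub_iff_add_eq_add.2 h

theorem addMonoidHomOfAddOnNonneg_apply_of_nonneg (s : α → β)
    (hs : ∀ x y, 0 ≤ x → 0 ≤ y → s (x + y) = s x + s y) {x : α} (hx : 0 ≤ x) :
    addMonoidHomOfAddOnNonneg s hs x = s x := by
  have hs0 : s 0 = 0 := by simpa using hs 0 0 le_rfl le_rfl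
  simp [addMonoidHomOfAddOnNonneg, posPart_eq_self.2 hx, negPart_eq_zero.2 hx, hs0]

end LatticeOrderedGroup

section NormedLattice

variable {E : Type*} [NormedAddCommGroup E] [Lattice E] [HasSolidNorm E] [IsOrderedAddMonoid E]

theorem norm_le_norm_of_nonneg_of_le {x y : E} (hy : 0 ≤ y) (h : y ≤ x) : ‖y‖ ≤ ‖x‖ :=
  norm_le_norm_of_abs_le_abs <| by rwa [abs_of_nonneg hy, abs_of_nonneg (hy.trans h)]

theorem norm_posPart_le_s14 (x : E) : ‖x⁺‖ ≤ ‖x‖ :=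
  norm_abs_eq_norm x ▸ norm_le_norm_of_nonneg_of_le (posPart_nonneg x)
    (sup_le (le_abs_self x) (abs_nonneg x))

theorem norm_negPart_le (x : E) : ‖x⁻‖ ≤ ‖x‖ :=
  norm_abs_eq_norm x ▸ norm_le_norm_of_nonneg_of_le (negPart_nonneg x)
    (sup_le (neg_le_abs x) (abs_nonneg x))

end NormedLattice

namespace ContinuousLinearMap

variable {E : Type*} [NormedAddCommGroup E] [Lattice E] [NormedSpace ℝ E] (f : E →L[ℝ] ℝ)

/-- The Riesz–Kantorovich formula for the positive part `f⁺` of `f` on the positive cone. -/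
noncomputable def upperEnvelope (x : E) : ℝ := sSup (f '' Set.Icc 0 x)

theorem upperEnvelope_le {x : E} (hx : 0 ≤ x) {c : ℝ} (h : ∀ y ∈ Set.Icc 0 x, f y ≤ c) :
    f.upperEnvelope x ≤ c :=
  csSup_le ((Set.nonempty_Icc.2 hx).image f) (Set.forall_mem_image.2 h)

variable [HasSolidNorm E] [IsOrderedAddMonoid E]

theorem norm_mul_norm_mem_upperBounds_image_Icc (x : E) :
    ‖f‖ * ‖x‖ ∈ upperBounds (f '' Set.Icc 0 x) := by
  rintro _ ⟨y, ⟨hy0, hyx⟩, rfl⟩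
  exact (le_abs_self _).trans <| (f.le_opNorm y).trans <|
    mul_le_mul_of_nonneg_left (norm_le_norm_of_nonneg_of_le hy0 hyx) (norm_nonneg f)

theorem bddAbove_image_Icc (x : E) : BddAbove (f '' Set.Icc 0 x) :=
  ⟨_, f.norm_mul_norm_mem_upperBounds_image_Icc x⟩

theorem apply_le_upperEnvelope {x y : E} (hy : y ∈ Set.Icc 0 x) : f y ≤ f.upperEnvelope x :=
  le_csSup (f.bddAbove_image_Icc x) (Set.mem_image_of_mem f hy)

theorem upperEnvelope_nonneg {x : E} (hx : 0 ≤ x) : 0 ≤ f.upperEnvelope x := by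
  simpa using f.apply_le_upperEnvelope (Set.left_mem_Icc.2 hx)

theorem upperEnvelope_le_norm_mul {x : E} (hx : 0 ≤ x) : f.upperEnvelope x ≤ ‖f‖ * ‖x‖ :=
  csSup_le ((Set.nonempty_Icc.2 hx).image f) (f.norm_mul_norm_mem_upperBounds_image_Icc x)

theorem upperEnvelope_add {x y : E} (hx : 0 ≤ x) (hy : 0 ≤ y) :
    f.upperEnvelope (x + y) = f.upperEnvelope x + f.upperEnvelope y := by
  refine le_antisymm (f.upperEnvelope_le (add_nonneg hx hy) fun z ⟨hz0, hzxy⟩ => ?_) ?_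
  · obtain ⟨a, ha, b, hb, rfl⟩ := exists_add_eq_of_le_add hx hy hz0 hzxy
    rw [map_add]
    exact add_le_add (f.apply_le_upperEnvelope ha) (f.apply_le_upperEnvelope hb)
  · rw [upperEnvelope, upperEnvelope, ← csSup_add ((Set.nonempty_Icc.2 hx).image f)
      (f.bddAbove_image_Icc x) ((Set.nonempty_Icc.2 hy).image f) (f.bddAbove_image_Icc y)]
    refine csSup_le (((Set.nonempty_Icc.2 hx).image f).add ((Set.nonempty_Icc.2 hy).image f)) ?_
    rintro _ ⟨_, ⟨a, ha, rfl⟩, _, ⟨b, hb, rfl⟩, rfl⟩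
    show f a + f b ≤ _
    rw [← map_add]
    exact f.apply_le_upperEnvelope ⟨add_nonneg ha.1 hb.1, add_le_add ha.2 hb.2⟩

noncomputable def positivePart : E →L[ℝ] ℝ :=
  AddMonoidHom.toRealLinearMap (addMonoidHomOfAddOnNonneg f.upperEnvelope
      fun _ _ => f.upperEnvelope_add) <|
    AddMonoidHomClass.continuous_of_bound _ (2 * ‖f‖) fun x => by
      have hpos := f.upperEnvelope_nonneg (posPart_nonneg x)
      have hneg := f.upperEnvelope_nonneg (negPart_nonneg x)
      calc ‖f.upperEnvelope x⁺ - f.upperEnvelope x⁻‖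
          ≤ f.upperEnvelope x⁺ + f.upperEnvelope x⁻ := by
            rw [Real.norm_eq_abs, abs_le]
            constructor <;> linarith
        _ ≤ ‖f‖ * ‖x⁺‖ + ‖f‖ * ‖x⁻‖ :=
            add_le_add (f.upperEnvelope_le_norm_mul (posPart_nonneg x))
              (f.upperEnvelope_le_norm_mul (negPart_nonneg x))
        _ ≤ 2 * ‖f‖ * ‖x‖ := by
            rw [mul_assoc, two_mul]
            gcongr
            exacts [norm_posPart_le_s14 x, norm_negPart_le x]

theorem positivePart_apply_of_nonneg {x : E} (hx : 0 ≤ x) :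
    f.positivePart x = f.upperEnvelope x :=
  addMonoidHomOfAddOnNonneg_apply_of_nonneg _ (fun _ _ => f.upperEnvelope_add) hx

theorem positivePart_nonneg {x : E} (hx : 0 ≤ x) : 0 ≤ f.positivePart x :=
  f.positivePart_apply_of_nonneg hx ▸ f.upperEnvelope_nonneg hx

theorem apply_le_positivePart {x : E} (hx : 0 ≤ x) : f x ≤ f.positivePart x :=
  f.positivePart_apply_of_nonneg hx ▸ f.apply_le_upperEnvelope (Set.right_mem_Icc.2 hx)

end ContinuousLinearMap

section BanachLattice

variable {E : Type*} [NormedAddCommGroup E] [Lattice E] [HasSolidNorm E] [IsOrderedAddMonoid E]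
  [NormedSpace ℝ E] {ι : Type*} {l : Filter ι} {x : ι → E}

/-- Every functional is the difference `f⁺ - (f⁺ - f)` of two positive ones. -/
theorem tendsto_apply_of_forall_nonneg_tendsto
    (h : ∀ g : E →L[ℝ] ℝ, (∀ y, 0 ≤ y → 0 ≤ g y) → Tendsto (fun i => g (x i)) l (𝓝 0))
    (f : E →L[ℝ] ℝ) : Tendsto (fun i => f (x i)) l (𝓝 0) := by
  have hpos := h f.positivePart fun _ => f.positivePart_nonneg
  have hdiff := h (f.positivePart - f) fun _ hy => sub_nonneg.2 (f.apply_le_positivePart hy)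
  simpa using hpos.sub hdiff

theorem tendsto_absWeakTopology_nhds_zero_iff :
    Tendsto x l (@nhds E (absWeakTopology E) 0) ↔
      ∀ g : E →L[ℝ] ℝ, (∀ y, 0 ≤ y → 0 ≤ g y) → Tendsto (fun i => g |x i|) l (𝓝 0) := by
  rw [absWeakTopology, nhds_iInf, tendsto_iInf, Subtype.forall]
  refine forall₂_congr fun g hg => ?_
  rw [@tendsto_iff_dist_tendsto_zero _ _ (absSeminormDist g hg)]
  show Tendsto (fun i => g |x i - 0|) l _ ↔ _
  simp only [sub_zero]

end BanachLattice

theorem positiveSchur_iff_absWeakNull_normNull_general {E : Type*} [NormedAddCommGroup E] [Lattice E] [HasSolidNorm E] [IsOrderedAddMonoid E] [NormedSpace ℝ E] :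
    (∀ x : ℕ → E, (∀ n, 0 ≤ x n) →
        (∀ f : E →L[ℝ] ℝ, Tendsto (fun n => f (x n)) atTop (𝓝 0)) →
        Tendsto (fun n => ‖x n‖) atTop (𝓝 0)) ↔
      (∀ x : ℕ → E, Tendsto x atTop (@nhds E (absWeakTopology E) 0) →
        Tendsto (fun n => ‖x n‖) atTop (𝓝 0)) := by
  constructor
  · intro hSchur x hx
    rw [tendsto_absWeakTopology_nhds_zero_iff] at hx
    simpa only [norm_abs_eq_norm] using hSchur (fun n => |x n|) (fun n => abs_nonneg (x n))
      (tendsto_apply_of_forall_nonneg_tendsto hx)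
  · intro hAbs x hx hweak
    refine hAbs x (tendsto_absWeakTopology_nhds_zero_iff.2 fun g _ => ?_)
    simpa only [abs_of_nonneg (hx _)] using hweak g

/-- A Banach lattice has the positive Schur property iff every absolutely weakly null sequence
is norm null. -/
theorem positiveSchur_iff_absWeakNull_normNull {E : Type*} [NormedAddCommGroup E] [Lattice E] [HasSolidNorm E] [IsOrderedAddMonoid E] [NormedSpace ℝ E] [PosSMulStrictMono ℝ E] [CompleteSpace E] :
    (∀ x : ℕ → E, (∀ n, 0 ≤ x n) →
        (∀ f : E →L[ℝ] ℝ, Tendsto (fun n => f (x n)) atTop (𝓝 0)) →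
        Tendsto (fun n => ‖x n‖) atTop (𝓝 0)) ↔
      (∀ x : ℕ → E, Tendsto x atTop (@nhds E (absWeakTopology E) 0) →
        Tendsto (fun n => ‖x n‖) atTop (𝓝 0)) :=
  positiveSchur_iff_absWeakNull_normNull_general
end
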